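/- arXiv:1104.4316 — 2 statements merged into one kernel-verified Lean document; each statement's English description precedes it below -/
import Mathlib

section
/- Let k be any field, l a positive integer, n = 2l, and r ≥ 2. Then tensor space decomposes as the internal direct sum (k^n)^{⊗r} = ⊕_{ξ ∈ Λ_2(l,r)} N^ξ, and each summand N^ξ is invariant both under the place permutation action of S_r and under the symplectic contraction operator C'. -/
open scoped TensorProduct

noncomputable section

variable (k : Type) [Field k]

/-- The `j`-th standard basis vector of `V = k^n`. -/
def stdVec (n : ℕ) (j : Fin n) : Fin n → k := Pi.single j 1

/-- Tensor space `V^{⊗ r}` where `V = k^n`. -/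
abbrev TensorSpace (n r : ℕ) := ⨂[k] _ : Fin r, (Fin n → k)

/-- The simple tensor `e_{i_1} ⊗ ⋯ ⊗ e_{i_r}` attached to a multi-index. -/
def simpleTensor (n r : ℕ) (f : Fin r → Fin n) : TensorSpace k n r :=
  PiTensorProduct.tprod k fun a => stdVec k n (f a)

/-- The weight of a multi-index: its `j`-th entry is the number of positions `a`
with `f a = j`. -/
def weight (n r : ℕ) (f : Fin r → Fin n) : Fin n → ℕ :=
  fun j => (Finset.univ.filter fun a => f a = j).card

/-- `M^λ`: the span of the simple tensors of basis vectors whose multi-index has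
weight `λ`. -/
def Mlam (n r : ℕ) (lam : Fin n → ℕ) : Submodule k (TensorSpace k n r) :=
  Submodule.span k
    {x | ∃ f : Fin r → Fin n, weight n r f = lam ∧ x = simpleTensor k n r f}

/-- The place permutation action of `σ ∈ S_r` on tensor space: the `a`-th tensor
factor of `(v_1 ⊗ ⋯ ⊗ v_r)·σ` is `v_{σ⁻¹ a}`. -/
def placePerm (n r : ℕ) (σ : Equiv.Perm (Fin r)) :
    TensorSpace k n r →ₗ[k] TensorSpace k n r :=
  (PiTensorProduct.reindex k (fun _ : Fin r => Fin n → k) σ).toLinearMap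

/-- The sign `ε_i`: `1` if `i ≤ l` (one-based), `−1` otherwise. -/
def eps (l : ℕ) (i : Fin (2 * l)) : k := if (i : ℕ) < l then 1 else -1

/-- The symplectic contraction operator `C'` on `V^{⊗r}` for the
skew-symmetric bilinear form `⟨e_i, e_j⟩ = ε_i δ_{i,j'}`: the unique linear map
with `C'(v₁ ⊗ v₂ ⊗ w) = ⟨v₁, v₂⟩ · (∑ j, ε_j e_j ⊗ e_{j'}) ⊗ w`. -/
def contractionSp (l r : ℕ) (_hr : 2 ≤ r) :
    TensorSpace k (2 * l) r →ₗ[k] TensorSpace k (2 * l) r :=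
  PiTensorProduct.lift
    (∑ i : Fin (2 * l), ∑ j : Fin (2 * l), (eps k l i * eps k l j) •
      (PiTensorProduct.tprod k).compLinearMap fun a : Fin r =>
        if a.val = 0 then (LinearMap.proj i).smulRight (stdVec k (2 * l) j)
        else if a.val = 1 then
          (LinearMap.proj (Fin.rev i)).smulRight (stdVec k (2 * l) (Fin.rev j))
        else LinearMap.id)

/-- For `n = 2l`, the map `π : Λ(n,r) → ℤ^l` given by
`π(λ) = (λ_1 − λ_{1'}, …, λ_l − λ_{l'})`, where `i' = n+1−i` (one-based),
i.e. `i' = 2l−1−i` in zero-based indexing. -/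
def piEven (l : ℕ) (lam : Fin (2 * l) → ℕ) : Fin l → ℤ :=
  fun i => (lam ⟨i.val, by have := i.isLt; omega⟩ : ℤ)
    - (lam ⟨2 * l - 1 - i.val, by have := i.isLt; omega⟩ : ℤ)

/-- `Λ₂(l,r)`: tuples `ξ ∈ ℤ^l` with `|ξ_1| + ⋯ + |ξ_l| = r − 2s` for some
integer `s` with `0 ≤ 2s ≤ r`. -/
def Lambda2 (l r : ℕ) : Set (Fin l → ℤ) :=
  {ξ | ∃ s : ℕ, 2 * s ≤ r ∧ ∑ i, |ξ i| = (r : ℤ) - 2 * s}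

/-- `N^ξ`: the sum of the `M^λ` over the fiber of `π` above `ξ`. -/
def Nxi2 (l r : ℕ) (ξ : Fin l → ℤ) : Submodule k (TensorSpace k (2 * l) r) :=
  ⨆ lam ∈ {lam : Fin (2 * l) → ℕ | (∑ j, lam j = r) ∧ piEven l lam = ξ},
    Mlam k (2 * l) r lam

/-! ### Auxiliary material -/

/-- Coordinate functional dual to a simple tensor. -/
def coordFun (n r : ℕ) (f : Fin r → Fin n) : TensorSpace k n r →ₗ[k] k :=
  PiTensorProduct.lift ((MultilinearMap.mkPiAlgebra k (Fin r) k).compLinearMap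
    fun a => LinearMap.proj (f a))

lemma coordFun_simpleTensor (n r : ℕ) (f g : Fin r → Fin n) :
    coordFun k n r f (simpleTensor k n r g) = if g = f then 1 else 0 := by
  rw [coordFun, simpleTensor, PiTensorProduct.lift.tprod]
  simp only [MultilinearMap.compLinearMap_apply, MultilinearMap.mkPiAlgebra_apply,
    LinearMap.proj_apply]
  by_cases h : g = f
  · subst h; simp [stdVec]
  · rw [if_neg h]
    obtain ⟨a, ha⟩ := Function.ne_iff.mp h
    exact Finset.prod_eq_zero (Finset.mem_univ a)
      (by simp [stdVec, Pi.single_apply, Ne.symm ha])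

lemma simpleTensor_li (n r : ℕ) :
    LinearIndependent k (fun f : Fin r → Fin n => simpleTensor k n r f) := by
  rw [Fintype.linearIndependent_iff]
  intro c hc f
  have := congrArg (coordFun k n r f) hc
  simpa [map_sum, map_smul, coordFun_simpleTensor] using this

lemma span_simpleTensor_eq_top (n r : ℕ) :
    Submodule.span k (Set.range (simpleTensor k n r)) = ⊤ := by
  rw [eq_top_iff, ← PiTensorProduct.span_tprod_eq_top, Submodule.span_le]
  rintro x ⟨v, rfl⟩
  have hv : v = fun a => ∑ j : Fin n, v a j • stdVec k n j := by
    funext a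
    rw [show (∑ j : Fin n, v a j • stdVec k n j) = ∑ j : Fin n, Pi.single j (v a j) by
      refine Finset.sum_congr rfl fun j _ => ?_
      rw [stdVec, ← Pi.single_smul, smul_eq_mul, mul_one], Finset.univ_sum_single]
  rw [hv, MultilinearMap.map_sum]
  apply Submodule.sum_mem
  intro p _
  rw [MultilinearMap.map_smul_univ]
  exact Submodule.smul_mem _ _ (Submodule.subset_span ⟨p, rfl⟩)

/-- Basis of simple tensors. -/
def stBasis (n r : ℕ) : Module.Basis (Fin r → Fin n) k (TensorSpace k n r) :=
  Module.Basis.mk (simpleTensor_li k n r) (span_simpleTensor_eq_top k n r).ge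

lemma stBasis_apply (n r : ℕ) (f : Fin r → Fin n) :
    stBasis k n r f = simpleTensor k n r f := by
  rw [stBasis, Module.Basis.coe_mk]

def loIdx (l : ℕ) (i : Fin l) : Fin (2 * l) := ⟨i.val, by have := i.isLt; omega⟩
def hiIdx (l : ℕ) (i : Fin l) : Fin (2 * l) :=
  ⟨2 * l - 1 - i.val, by have := i.isLt; omega⟩

lemma piEven_eq (l : ℕ) (lam : Fin (2 * l) → ℕ) (i : Fin l) :
    piEven l lam i = (lam (loIdx l i) : ℤ) - (lam (hiIdx l i) : ℤ) := rfl

def loHiEquiv (l : ℕ) : (Fin l ⊕ Fin l) ≃ Fin (2 * l) :=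
  Equiv.ofBijective (Sum.elim (loIdx l) (hiIdx l)) <| by
    rw [Fintype.bijective_iff_injective_and_card]
    constructor
    · rintro (a | a) (b | b) h <;>
        simp only [Sum.elim_inl, Sum.elim_inr, loIdx, hiIdx, Fin.mk.injEq] at h <;>
        first
        | (simp only [Sum.inl.injEq, Sum.inr.injEq]; have := a.isLt; have := b.isLt;
           exact Fin.ext (by omega))
        | (exfalso; have := a.isLt; have := b.isLt; omega)
    · simp [two_mul]

lemma sum_lo_hi {M : Type} [AddCommMonoid M] (l : ℕ) (v : Fin (2 * l) → M) :
    ∑ j, v j = ∑ i : Fin l, (v (loIdx l i) + v (hiIdx l i)) := by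
  rw [← Equiv.sum_comp (loHiEquiv l) v, Fintype.sum_sum_type, ← Finset.sum_add_distrib]
  rfl

lemma sum_weight (n r : ℕ) (f : Fin r → Fin n) : ∑ j, weight n r f j = r := by
  have := Finset.card_eq_sum_card_fiberwise (s := (Finset.univ : Finset (Fin r)))
    (t := (Finset.univ : Finset (Fin n))) (f := f) (fun a _ => Finset.mem_univ (f a))
  simpa [weight] using this.symm

def chi (l : ℕ) (t : Fin l) (m : Fin (2 * l)) : ℤ :=
  (if (m : ℕ) = t.val then 1 else 0) - (if (m : ℕ) = 2 * l - 1 - t.val then 1 else 0)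

lemma chi_add_rev (l : ℕ) (t : Fin l) (m : Fin (2 * l)) :
    chi l t m + chi l t (Fin.rev m) = 0 := by
  have h1 := m.isLt; have h2 := t.isLt
  simp only [chi, Fin.val_rev]
  split_ifs <;> omega

lemma piEven_weight_eq_sum (l r : ℕ) (f : Fin r → Fin (2 * l)) (t : Fin l) :
    piEven l (weight (2 * l) r f) t = ∑ a : Fin r, chi l t (f a) := by
  rw [piEven_eq, weight, weight, Finset.card_filter, Finset.card_filter]
  push_cast
  rw [← Finset.sum_sub_distrib]
  refine Finset.sum_congr rfl fun a _ => ?_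
  simp only [chi, Fin.ext_iff, loIdx, hiIdx]

lemma piEven_mem_Lambda2 (l r : ℕ) (f : Fin r → Fin (2 * l)) :
    piEven l (weight (2 * l) r f) ∈ Lambda2 l r := by
  set lam := weight (2 * l) r f with hlam
  have key : ∀ i : Fin l, |piEven l lam i| =
      (lam (loIdx l i) : ℤ) + lam (hiIdx l i)
        - 2 * min (lam (loIdx l i)) (lam (hiIdx l i)) := by
    intro i
    rw [piEven_eq]
    rcases le_total (lam (loIdx l i)) (lam (hiIdx l i)) with h | h
    · rw [abs_of_nonpos (by simp [h]), min_eq_left h]; push_cast; ring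
    · rw [abs_of_nonneg (by simp [h]), min_eq_right h]; push_cast; ring
  have hsum : ∑ i : Fin l, ((lam (loIdx l i) : ℤ) + lam (hiIdx l i)) = (r : ℤ) := by
    rw [← sum_lo_hi l (fun j => (lam j : ℤ))]
    exact_mod_cast congrArg (Nat.cast : ℕ → ℤ) (sum_weight (2 * l) r f)
  have this1 := Finset.sum_congr rfl (fun i (_ : i ∈ Finset.univ) => key i)
  rw [Finset.sum_sub_distrib, hsum, ← Finset.mul_sum] at this1
  have habs : (0 : ℤ) ≤ ∑ i : Fin l, |piEven l lam i| :=
    Finset.sum_nonneg fun i _ => abs_nonneg _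
  refine ⟨∑ i : Fin l, min (lam (loIdx l i)) (lam (hiIdx l i)), ?_, ?_⟩
  · have hc : (2 : ℤ) * (∑ i : Fin l, min (lam (loIdx l i)) (lam (hiIdx l i)) : ℕ) ≤ r := by
      push_cast at this1 ⊢
      omega
    exact_mod_cast hc
  · rw [this1]; push_cast; ring

/-- Abbreviation: the `π`-weight of a multi-index. -/
def pwt (l r : ℕ) (f : Fin r → Fin (2 * l)) : Fin l → ℤ :=
  piEven l (weight (2 * l) r f)

lemma Nxi2_eq_span (l r : ℕ) (ξ : Fin l → ℤ) :
    Nxi2 k l r ξ =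
      Submodule.span k (simpleTensor k (2 * l) r '' {f | pwt l r f = ξ}) := by
  apply le_antisymm
  · refine iSup₂_le fun lam hlam => ?_
    rw [Mlam, Submodule.span_le]
    rintro x ⟨f, hwf, rfl⟩
    exact Submodule.subset_span ⟨f, by rw [Set.mem_setOf_eq, pwt, hwf]; exact hlam.2, rfl⟩
  · rw [Submodule.span_le]
    rintro x ⟨f, hf, rfl⟩
    refine Submodule.mem_iSup_of_mem (weight (2 * l) r f) ?_
    refine Submodule.mem_iSup_of_mem ⟨sum_weight (2 * l) r f, hf⟩ ?_
    exact Submodule.subset_span ⟨f, rfl, rfl⟩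

lemma Nxi2_eq_span' (l r : ℕ) (ξ : Fin l → ℤ) :
    Nxi2 k l r ξ =
      Submodule.span k (stBasis k (2 * l) r '' {f | pwt l r f = ξ}) := by
  rw [Nxi2_eq_span]
  congr 1
  exact (Set.image_congr fun f _ => (stBasis_apply k (2 * l) r f)).symm

/-- first and second positions in `Fin r`. -/
def zr0 (r : ℕ) (hr : 2 ≤ r) : Fin r := ⟨0, by omega⟩
def zr1 (r : ℕ) (hr : 2 ≤ r) : Fin r := ⟨1, by omega⟩

/-- The multi-index obtained by replacing the first two entries by `j, j'`. -/
def gmap (l r : ℕ) (f : Fin r → Fin (2 * l)) (j : Fin (2 * l)) : Fin r → Fin (2 * l) :=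
  fun a => if a.val = 0 then j else if a.val = 1 then Fin.rev j else f a

lemma piEven_weight_gmap (l r : ℕ) (hr : 2 ≤ r) (f : Fin r → Fin (2 * l))
    (j : Fin (2 * l)) (hc : f (zr1 r hr) = Fin.rev (f (zr0 r hr))) :
    pwt l r (gmap l r f j) = pwt l r f := by
  funext t
  rw [pwt, pwt, piEven_weight_eq_sum, piEven_weight_eq_sum]
  rw [← sub_eq_zero, ← Finset.sum_sub_distrib]
  rw [← Finset.sum_subset
      (Finset.subset_univ ({zr0 r hr, zr1 r hr} : Finset (Fin r)))
      (fun a _ ha => ?_)]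
  · rw [Finset.sum_pair (by simp [zr0, zr1, Fin.ext_iff])]
    have e0 : gmap l r f j (zr0 r hr) = j := by simp [gmap, zr0]
    have e1 : gmap l r f j (zr1 r hr) = Fin.rev j := by simp [gmap, zr1]
    rw [e0, e1, hc]
    have h1 := chi_add_rev l t j
    have h2 := chi_add_rev l t (f (zr0 r hr))
    linarith
  · simp only [Finset.mem_insert, Finset.mem_singleton, not_or, zr0, zr1,
      Fin.ext_iff] at ha
    have hg : gmap l r f j a = f a := by
      simp [gmap, ha.1, ha.2]
    rw [hg, sub_self]

lemma contractionSp_simpleTensor (l r : ℕ) (hr : 2 ≤ r) (f : Fin r → Fin (2 * l)) :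
    contractionSp k l r hr (simpleTensor k (2 * l) r f) =
    ∑ i : Fin (2 * l), ∑ j : Fin (2 * l), (eps k l i * eps k l j) •
      ((stdVec k (2 * l) (f (zr0 r hr)) i
          * stdVec k (2 * l) (f (zr1 r hr)) (Fin.rev i)) •
        simpleTensor k (2 * l) r (gmap l r f j)) := by
  rw [contractionSp, simpleTensor, PiTensorProduct.lift.tprod,
    MultilinearMap.sum_apply]
  refine Finset.sum_congr rfl fun i _ => ?_
  rw [MultilinearMap.sum_apply]
  refine Finset.sum_congr rfl fun j _ => ?_
  rw [MultilinearMap.smul_apply, MultilinearMap.compLinearMap_apply]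
  congr 1
  have hz01 : zr0 r hr ≠ zr1 r hr := by simp [zr0, zr1, Fin.ext_iff]
  have hfun : (fun a : Fin r =>
      ((if a.val = 0 then (LinearMap.proj i).smulRight (stdVec k (2 * l) j)
       else if a.val = 1 then
         (LinearMap.proj (Fin.rev i)).smulRight (stdVec k (2 * l) (Fin.rev j))
       else LinearMap.id :
         (Fin (2 * l) → k) →ₗ[k] (Fin (2 * l) → k))) (stdVec k (2 * l) (f a)))
      = Function.update (Function.update
          (fun a => stdVec k (2 * l) (gmap l r f j a)) (zr0 r hr)
          ((stdVec k (2 * l) (f (zr0 r hr)) i) • stdVec k (2 * l) j)) (zr1 r hr)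
          ((stdVec k (2 * l) (f (zr1 r hr)) (Fin.rev i)) •
            stdVec k (2 * l) (Fin.rev j)) := by
    funext a
    by_cases ha0 : (a : ℕ) = 0
    · have haz : a = zr0 r hr := Fin.ext ha0
      subst haz
      rw [Function.update_of_ne hz01, Function.update_self]
      simp [ha0]
    · by_cases ha1 : (a : ℕ) = 1
      · have haz : a = zr1 r hr := Fin.ext ha1
        subst haz
        rw [Function.update_self]
        simp [ha0, ha1]
      · rw [Function.update_of_ne (by simp [zr1, Fin.ext_iff, ha1]),
          Function.update_of_ne (by simp [zr0, Fin.ext_iff, ha0])]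
        simp [ha0, ha1, gmap]
  rw [hfun, MultilinearMap.map_update_smul, Function.update_comm hz01]
  have hF1 : Function.update (fun a => stdVec k (2 * l) (gmap l r f j a)) (zr1 r hr)
      (stdVec k (2 * l) (Fin.rev j)) = fun a => stdVec k (2 * l) (gmap l r f j a) := by
    rw [show stdVec k (2 * l) (Fin.rev j) = stdVec k (2 * l) (gmap l r f j (zr1 r hr)) by
      simp [gmap, zr1], Function.update_eq_self]
  rw [hF1, MultilinearMap.map_update_smul]
  have hF0 : Function.update (fun a => stdVec k (2 * l) (gmap l r f j a)) (zr0 r hr)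
      (stdVec k (2 * l) j) = fun a => stdVec k (2 * l) (gmap l r f j a) := by
    rw [show stdVec k (2 * l) j = stdVec k (2 * l) (gmap l r f j (zr0 r hr)) by
      simp [gmap, zr0], Function.update_eq_self]
  rw [hF0, smul_smul,
    mul_comm (stdVec k (2 * l) (f (zr1 r hr)) (Fin.rev i)) _]
  rfl

lemma placePerm_simpleTensor (n r : ℕ) (σ : Equiv.Perm (Fin r))
    (f : Fin r → Fin n) :
    placePerm k n r σ (simpleTensor k n r f)
      = simpleTensor k n r (fun a => f (σ.symm a)) := by
  rw [placePerm, simpleTensor, LinearEquiv.coe_coe, PiTensorProduct.reindex_tprod]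
  rfl

lemma weight_comp_perm (n r : ℕ) (σ : Equiv.Perm (Fin r)) (f : Fin r → Fin n) :
    weight n r (fun a => f (σ.symm a)) = weight n r f := by
  funext m
  exact Finset.card_equiv σ.symm (fun a => by simp [weight])

theorem tensorSpace_isInternal_Nxi_symplectic (l r : ℕ) (hl : 0 < l)
    (hr : 2 ≤ r) :
    DirectSum.IsInternal
        (fun ξ : {ξ : Fin l → ℤ // ξ ∈ Lambda2 l r} => Nxi2 k l r ξ.val)
      ∧ (∀ ξ ∈ Lambda2 l r, ∀ σ : Equiv.Perm (Fin r),
          ∀ v ∈ Nxi2 k l r ξ, placePerm k (2 * l) r σ v ∈ Nxi2 k l r ξ)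
      ∧ ∀ ξ ∈ Lambda2 l r,
          ∀ v ∈ Nxi2 k l r ξ, contractionSp k l r hr v ∈ Nxi2 k l r ξ := by
  classical
  refine ⟨?_, ?_, ?_⟩
  · rw [DirectSum.isInternal_submodule_iff_iSupIndep_and_iSup_eq_top]
    constructor
    · rw [iSupIndep_def]
      intro ξ
      rw [Submodule.disjoint_def]
      intro x hx hx'
      rw [Nxi2_eq_span' k l r ξ.val, Module.Basis.mem_span_image] at hx
      have hx2 : x ∈ Submodule.span k
          (stBasis k (2 * l) r '' {f | pwt l r f ≠ ξ.val}) := by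
        refine (iSup₂_le fun η hη => ?_ :
          (⨆ η, ⨆ _ : η ≠ ξ, Nxi2 k l r
            (η : {ξ : Fin l → ℤ // ξ ∈ Lambda2 l r}).val) ≤ _) hx'
        rw [Nxi2_eq_span' k l r η.val]
        apply Submodule.span_mono
        apply Set.image_mono
        intro f hf
        intro h
        exact hη (Subtype.ext (by rw [← hf, h]))
      rw [Module.Basis.mem_span_image] at hx2
      have hs : ((stBasis k (2 * l) r).repr x).support = ∅ := by
        rw [Finset.eq_empty_iff_forall_notMem]
        intro f hf
        exact hx2 (Finset.mem_coe.mpr hf) (hx (Finset.mem_coe.mpr hf))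
      have : (stBasis k (2 * l) r).repr x = 0 := Finsupp.support_eq_empty.mp hs
      exact (LinearEquiv.map_eq_zero_iff _).mp this
    · rw [eq_top_iff, ← span_simpleTensor_eq_top k (2 * l) r, Submodule.span_le]
      rintro x ⟨f, rfl⟩
      refine SetLike.mem_coe.mpr
        (Submodule.mem_iSup_of_mem ⟨pwt l r f, piEven_mem_Lambda2 l r f⟩ ?_)
      rw [Nxi2_eq_span]
      exact Submodule.subset_span ⟨f, rfl, rfl⟩
  · intro ξ hξ σ v hv
    rw [Nxi2_eq_span] at hv ⊢
    have hmap := Submodule.mem_map_of_mem (f := placePerm k (2 * l) r σ) hv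
    rw [Submodule.map_span] at hmap
    refine Submodule.span_le.mpr ?_ hmap
    rintro y ⟨x, ⟨f, hf, rfl⟩, rfl⟩
    rw [placePerm_simpleTensor]
    refine Submodule.subset_span ⟨fun a => f (σ.symm a), ?_, rfl⟩
    rw [Set.mem_setOf_eq, pwt, weight_comp_perm]
    exact hf
  · intro ξ hξ v hv
    rw [Nxi2_eq_span] at hv ⊢
    have hmap := Submodule.mem_map_of_mem (f := contractionSp k l r hr) hv
    rw [Submodule.map_span] at hmap
    refine Submodule.span_le.mpr ?_ hmap
    rintro y ⟨x, ⟨f, hf, rfl⟩, rfl⟩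
    show contractionSp k l r hr (simpleTensor k (2 * l) r f) ∈ _
    rw [contractionSp_simpleTensor k l r hr f]
    refine Submodule.sum_mem _ fun i _ => Submodule.sum_mem _ fun j _ => ?_
    refine Submodule.smul_mem _ _ ?_
    by_cases hc : f (zr1 r hr) = Fin.rev (f (zr0 r hr))
    · refine Submodule.smul_mem _ _ ?_
      refine Submodule.subset_span ⟨gmap l r f j, ?_, rfl⟩
      rw [Set.mem_setOf_eq, piEven_weight_gmap l r hr f j hc]
      exact hf
    · have h0 : stdVec k (2 * l) (f (zr0 r hr)) i
          * stdVec k (2 * l) (f (zr1 r hr)) (Fin.rev i) = 0 := by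
        by_cases h1 : i = f (zr0 r hr)
        · have h2 : ¬ (Fin.rev i = f (zr1 r hr)) := by
            rw [h1]; exact fun h => hc h.symm
          simp [stdVec, Pi.single_apply, h2]
        · simp [stdVec, Pi.single_apply, h1]
      rw [h0, zero_smul]
      exact Submodule.zero_mem _

end
end

section
/- Let k be any field, l a positive integer, n = 2l, and r ≥ 2. Let w be a permutation of {1,…,n} with w(i') = w(i)' for all i whose permutation matrix preserves the skew-symmetric form ⟨ , ⟩, and define the associated signed permutation ẇ : ℤ^l → ℤ^l by ẇ(ξ)_i = ξ_{w^{-1}(i)} if w^{-1}(i) ≤ l and ẇ(ξ)_i = −ξ_{(w^{-1}(i))'} if w^{-1}(i) > l. Then for every ξ ∈ Λ_2(l,r), the k-linear map determined by e_{i_1}⊗⋯⊗e_{i_r} ↦ e_{w(i_1)}⊗⋯⊗e_{w(i_r)} restricts to a linear isomorphism N^ξ → N^{ẇ(ξ)} that commutes with the place permutation action of S_r and with the symplectic contraction operator C'. -/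
open scoped TensorProduct

noncomputable section

variable (k : Type) [Field k]

/-- The linear endomorphism of tensor space determined on basis elements by
`e_{i_1} ⊗ ⋯ ⊗ e_{i_r} ↦ e_{w(i_1)} ⊗ ⋯ ⊗ e_{w(i_r)}`; on `V = k^n` the map
sends `e_i ↦ e_{w i}`, i.e. `v ↦ v ∘ w⁻¹`. -/
def wAction (n r : ℕ) (w : Equiv.Perm (Fin n)) :
    TensorSpace k n r →ₗ[k] TensorSpace k n r :=
  PiTensorProduct.map fun _ => LinearMap.funLeft k k ⇑w⁻¹

/-- The signed permutation `ẇ : ℤ^l → ℤ^l` attached to `w ∈ S_{2l}`: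
`ẇ(ξ)_i = ξ_{w⁻¹(i)}` if `w⁻¹(i) ≤ l` and `ẇ(ξ)_i = −ξ_{(w⁻¹(i))'}` otherwise
(one-based; zero-based, `(w⁻¹(i))' = 2l−1−w⁻¹(i)`). -/
def wdot (l : ℕ) (w : Equiv.Perm (Fin (2 * l))) (ξ : Fin l → ℤ) : Fin l → ℤ :=
  fun i =>
    let j : Fin (2 * l) := w⁻¹ ⟨i.val, by have := i.isLt; omega⟩
    if h : j.val < l then ξ ⟨j.val, h⟩
    else -ξ ⟨2 * l - 1 - j.val, by have := j.isLt; omega⟩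

/-- The skew-symmetric bilinear form on `k^{2l}` with `⟨e_i, e_j⟩ = ε_i δ_{i,j'}`,
so `⟨u, v⟩ = ∑ i, ε_i u i * v (Fin.rev i)`. -/
def skewForm (l : ℕ) (u v : Fin (2 * l) → k) : k :=
  ∑ i, eps k l i * (u i * v (Fin.rev i))

lemma perm_inv_apply_self' {α : Type*} (w : Equiv.Perm α) (x : α) : w⁻¹ (w x) = x :=
  w.symm_apply_apply x

lemma perm_apply_inv_self' {α : Type*} (w : Equiv.Perm α) (x : α) : w (w⁻¹ x) = x :=
  w.apply_symm_apply x

lemma funLeft_stdVec (n : ℕ) (w : Equiv.Perm (Fin n)) (i : Fin n) :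
    LinearMap.funLeft k k ⇑w⁻¹ (stdVec k n i) = stdVec k n (w i) := by
  funext x
  simp only [stdVec, LinearMap.funLeft_apply, Pi.single_apply]
  by_cases h : x = w i
  · subst h; simp
  · rw [if_neg h, if_neg]
    intro h'; exact h (by rw [← h']; simp)

lemma wAction_inj (n r : ℕ) (w : Equiv.Perm (Fin n)) :
    Function.Injective (wAction k n r w) := by
  have h : (wAction k n r w⁻¹) ∘ₗ (wAction k n r w) = LinearMap.id := by
    apply PiTensorProduct.ext
    refine MultilinearMap.ext fun f => ?_
    simp only [wAction, LinearMap.compMultilinearMap_apply, LinearMap.comp_apply,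
      PiTensorProduct.map_tprod, LinearMap.id_apply]
    congr 1
    funext a
    funext x
    simp
  intro x y hxy
  have := congrArg (wAction k n r w⁻¹) hxy
  rwa [← LinearMap.comp_apply, ← LinearMap.comp_apply, h, LinearMap.id_apply,
    LinearMap.id_apply] at this

lemma wAction_placePerm (n r : ℕ) (w : Equiv.Perm (Fin n)) (σ : Equiv.Perm (Fin r)) (x : TensorSpace k n r) :
    wAction k n r w (placePerm k n r σ x) = placePerm k n r σ (wAction k n r w x) := by
  have h : (wAction k n r w) ∘ₗ (placePerm k n r σ) = (placePerm k n r σ) ∘ₗ (wAction k n r w) := by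
    apply PiTensorProduct.ext
    refine MultilinearMap.ext fun f => ?_
    simp [wAction, placePerm, PiTensorProduct.reindex_tprod, Function.comp_def]
  exact DFunLike.congr_fun h x

lemma wAction_simpleTensor (n r : ℕ) (w : Equiv.Perm (Fin n)) (f : Fin r → Fin n) :
    wAction k n r w (simpleTensor k n r f) = simpleTensor k n r (⇑w ∘ f) := by
  simp only [wAction, simpleTensor, PiTensorProduct.map_tprod, funLeft_stdVec, Function.comp_def]

lemma weight_comp (n r : ℕ) (w : Equiv.Perm (Fin n)) (f : Fin r → Fin n) :
    weight n r (⇑w ∘ f) = (weight n r f) ∘ ⇑w⁻¹ := by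
  funext j
  simp only [weight, Function.comp_apply]
  congr 1
  ext a
  simp [Equiv.Perm.eq_inv_iff_eq, eq_comm]
  rw [Equiv.eq_symm_apply, eq_comm]

lemma map_Mlam (n r : ℕ) (w : Equiv.Perm (Fin n)) (lam : Fin n → ℕ) :
    Submodule.map (wAction k n r w) (Mlam k n r lam) = Mlam k n r (lam ∘ ⇑w⁻¹) := by
  rw [Mlam, Submodule.map_span, Mlam]
  congr 1
  ext x
  constructor
  · rintro ⟨y, ⟨f, hf, rfl⟩, rfl⟩
    exact ⟨⇑w ∘ f, by rw [weight_comp, hf], wAction_simpleTensor k n r w f⟩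
  · rintro ⟨g, hg, rfl⟩
    refine ⟨simpleTensor k n r (⇑w⁻¹ ∘ g), ⟨⇑w⁻¹ ∘ g, ?_, rfl⟩, ?_⟩
    · rw [weight_comp]
      funext j
      simpa using congrFun hg (w j)
    · rw [wAction_simpleTensor]
      congr 1
      funext a
      simp

lemma rev_inv (l : ℕ) (w : Equiv.Perm (Fin (2 * l)))
    (hw : ∀ i, w (Fin.rev i) = Fin.rev (w i)) (i : Fin (2 * l)) :
    w⁻¹ (Fin.rev i) = Fin.rev (w⁻¹ i) := by
  have h := hw (w⁻¹ i)
  rw [perm_apply_inv_self'] at h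
  exact Equiv.Perm.inv_eq_iff_eq.2 h.symm

lemma piEven_comp (l : ℕ) (w : Equiv.Perm (Fin (2 * l)))
    (hw : ∀ i, w (Fin.rev i) = Fin.rev (w i)) (lam : Fin (2 * l) → ℕ) :
    piEven l (lam ∘ ⇑w⁻¹) = wdot l w (piEven l lam) := by
  funext i
  have hil := i.isLt
  set ι : Fin (2 * l) := ⟨i.val, by omega⟩ with hι
  have hrev : (⟨2 * l - 1 - i.val, by omega⟩ : Fin (2 * l)) = Fin.rev ι := by
    ext; simp [Fin.val_rev, hι]; omega
  simp only [piEven, Function.comp_apply, wdot]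
  rw [hrev, rev_inv l w hw]
  set j := w⁻¹ ι with hj
  have hjl := j.isLt
  split_ifs with h
  · have e1 : (⟨j.val, by omega⟩ : Fin (2 * l)) = j := by ext; rfl
    have e2 : (⟨2 * l - 1 - j.val, by omega⟩ : Fin (2 * l)) = Fin.rev j := by
      ext; simp [Fin.val_rev]; omega
    rw [e1, e2]
  · have e1 : (⟨2 * l - 1 - j.val, by omega⟩ : Fin (2 * l)) = Fin.rev j := by
      ext; simp [Fin.val_rev]; omega
    have e2 : (⟨2 * l - 1 - (2 * l - 1 - j.val), by omega⟩ : Fin (2 * l)) = j := by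
      ext; simp; omega
    rw [e1, e2]
    ring

lemma wdot_comp (l : ℕ) (w : Equiv.Perm (Fin (2 * l)))
    (hw : ∀ i, w (Fin.rev i) = Fin.rev (w i)) (ξ : Fin l → ℤ) :
    wdot l w⁻¹ (wdot l w ξ) = ξ := by
  funext i
  have hil := i.isLt
  have hB : ∀ (h2 : 2 * l - 1 - (w (⟨i.val, by omega⟩ : Fin (2 * l))).val < 2 * l),
      w⁻¹ (⟨2 * l - 1 - (w (⟨i.val, by omega⟩ : Fin (2 * l))).val, h2⟩ : Fin (2 * l))
        = Fin.rev (⟨i.val, by omega⟩ : Fin (2 * l)) := by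
    intro h2
    have e : (⟨2 * l - 1 - (w (⟨i.val, by omega⟩ : Fin (2 * l))).val, h2⟩ : Fin (2 * l))
        = Fin.rev (w (⟨i.val, by omega⟩ : Fin (2 * l))) := by
      ext; simp [Fin.val_rev]; omega
    rw [e, rev_inv l w hw, perm_inv_apply_self']
  simp only [wdot, inv_inv, Fin.val_mk, Fin.eta, perm_inv_apply_self']
  simp only [hB]
  split_ifs with h1 h2
  · rfl
  · exfalso; simp only [Fin.val_rev, Fin.val_mk] at h2; omega
  · rw [neg_neg]
    congr 1
    ext
    simp only [Fin.val_rev, Fin.val_mk]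
    omega

lemma map_Nxi2 (l r : ℕ) (w : Equiv.Perm (Fin (2 * l)))
    (hw : ∀ i, w (Fin.rev i) = Fin.rev (w i)) (ξ : Fin l → ℤ) :
    Submodule.map (wAction k (2 * l) r w) (Nxi2 k l r ξ) = Nxi2 k l r (wdot l w ξ) := by
  apply le_antisymm
  · rw [Submodule.map_le_iff_le_comap, Nxi2]
    refine iSup₂_le fun lam hlam => ?_
    rw [← Submodule.map_le_iff_le_comap, map_Mlam, Nxi2]
    refine le_iSup₂_of_le (lam ∘ ⇑w⁻¹) ?_ le_rfl
    refine ⟨?_, ?_⟩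
    · rw [show (∑ j, (lam ∘ ⇑w⁻¹) j) = ∑ j, lam j from Equiv.sum_comp w⁻¹ lam]
      exact hlam.1
    · rw [piEven_comp l w hw lam, hlam.2]
  · rw [Nxi2]
    refine iSup₂_le fun mu hmu => ?_
    have hmu' : Mlam k (2 * l) r mu
        = Submodule.map (wAction k (2 * l) r w) (Mlam k (2 * l) r (mu ∘ ⇑w)) := by
      rw [map_Mlam]
      congr 1
      funext j
      simp
    rw [hmu']
    apply Submodule.map_mono
    rw [Nxi2]
    refine le_iSup₂_of_le (mu ∘ ⇑w) ?_ le_rfl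
    refine ⟨?_, ?_⟩
    · rw [show (∑ j, (mu ∘ ⇑w) j) = ∑ j, mu j from Equiv.sum_comp w mu]
      exact hmu.1
    · have h1 : piEven l (mu ∘ ⇑w) = wdot l w⁻¹ (piEven l mu) := by
        have := piEven_comp l w⁻¹ (rev_inv l w hw) mu
        rwa [inv_inv] at this
      rw [h1, hmu.2, wdot_comp l w hw]

lemma skew_single (l : ℕ) (i : Fin (2 * l)) :
    skewForm k l (stdVec k (2 * l) i) (stdVec k (2 * l) (Fin.rev i)) = eps k l i := by
  rw [skewForm, Finset.sum_eq_single i]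
  · simp [stdVec]
  · intro m _ hm
    simp [stdVec, Pi.single_apply, hm]
  · simp

lemma eps_w (l : ℕ) (w : Equiv.Perm (Fin (2 * l)))
    (hw : ∀ i, w (Fin.rev i) = Fin.rev (w i))
    (hw' : ∀ u v : Fin (2 * l) → k,
      skewForm k l (LinearMap.funLeft k k ⇑w⁻¹ u) (LinearMap.funLeft k k ⇑w⁻¹ v)
        = skewForm k l u v) (i : Fin (2 * l)) :
    eps k l (w i) = eps k l i := by
  have h := hw' (stdVec k (2 * l) i) (stdVec k (2 * l) (Fin.rev i))
  rw [funLeft_stdVec, funLeft_stdVec, hw, skew_single, skew_single] at h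
  exact h

lemma contr_comm (l r : ℕ) (hr : 2 ≤ r) (w : Equiv.Perm (Fin (2 * l)))
    (hw : ∀ i, w (Fin.rev i) = Fin.rev (w i))
    (hw' : ∀ u v : Fin (2 * l) → k,
      skewForm k l (LinearMap.funLeft k k ⇑w⁻¹ u) (LinearMap.funLeft k k ⇑w⁻¹ v)
        = skewForm k l u v) (x : TensorSpace k (2 * l) r) :
    wAction k (2 * l) r w (contractionSp k l r hr x)
      = contractionSp k l r hr (wAction k (2 * l) r w x) := by
  have hR : ∀ (F : Fin (2 * l) → Fin (2 * l) → TensorSpace k (2 * l) r),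
      (∑ i, ∑ j, F i j) = ∑ i, ∑ j, F (w i) (w j) := by
    intro F
    rw [← Equiv.sum_comp w (fun i => ∑ j, F i j)]
    exact Finset.sum_congr rfl fun i _ => (Equiv.sum_comp w (F (w i))).symm
  have h : (wAction k (2 * l) r w) ∘ₗ contractionSp k l r hr
      = contractionSp k l r hr ∘ₗ wAction k (2 * l) r w := by
    apply PiTensorProduct.ext
    refine MultilinearMap.ext fun f => ?_
    simp only [LinearMap.compMultilinearMap_apply, LinearMap.comp_apply, wAction,
      PiTensorProduct.map_tprod, contractionSp, PiTensorProduct.lift.tprod,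
      MultilinearMap.sum_apply, MultilinearMap.smul_apply,
      MultilinearMap.compLinearMap_apply, map_sum, map_smul, LinearMap.sum_apply,
      LinearMap.smul_apply]
    conv_rhs => rw [hR]
    refine Finset.sum_congr rfl fun i _ => Finset.sum_congr rfl fun j _ => ?_
    rw [eps_w k l w hw hw' i, eps_w k l w hw hw' j]
    congr 1
    congr 1
    funext a
    by_cases h0 : a.val = 0
    · simp only [h0, if_pos, LinearMap.smulRight_apply, LinearMap.proj_apply, map_smul,
        funLeft_stdVec, LinearMap.funLeft_apply, perm_inv_apply_self']
    · by_cases h1 : a.val = 1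
      · simp only [h0, h1]
        rw [if_neg (by decide : ¬(1:ℕ) = 0), if_neg (by decide : ¬(1:ℕ) = 0)]
        simp only [if_true, LinearMap.smulRight_apply, LinearMap.proj_apply,
          map_smul, funLeft_stdVec, LinearMap.funLeft_apply, ← hw, rev_inv l w hw,
          perm_inv_apply_self']
      · simp only [h0, h1, if_false, LinearMap.id_apply]
  exact DFunLike.congr_fun h x

/-- over any field, for `n = 2l` and `w ∈ S_n` with
`w(i') = w(i)'` for all `i` whose permutation matrix preserves the
skew-symmetric form, the map `e_{i_1} ⊗ ⋯ ⊗ e_{i_r} ↦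
e_{w(i_1)} ⊗ ⋯ ⊗ e_{w(i_r)}` restricts to a linear isomorphism
`N^ξ → N^{ẇ(ξ)}` commuting with the place permutation action of `S_r` and with
the symplectic contraction operator `C'`. -/
theorem Nxi_iso_Nxi_of_weyl_symplectic (l r : ℕ) (hl : 0 < l) (hr : 2 ≤ r)
    (w : Equiv.Perm (Fin (2 * l)))
    (hw : ∀ i, w (Fin.rev i) = Fin.rev (w i))
    (hw' : ∀ u v : Fin (2 * l) → k,
      skewForm k l (LinearMap.funLeft k k ⇑w⁻¹ u) (LinearMap.funLeft k k ⇑w⁻¹ v)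
        = skewForm k l u v)
    (ξ : Fin l → ℤ) (hξ : ξ ∈ Lambda2 l r) :
    Submodule.map (wAction k (2 * l) r w) (Nxi2 k l r ξ)
        = Nxi2 k l r (wdot l w ξ)
      ∧ Set.InjOn (wAction k (2 * l) r w) (Nxi2 k l r ξ)
      ∧ (∀ σ : Equiv.Perm (Fin r), ∀ x ∈ Nxi2 k l r ξ,
          wAction k (2 * l) r w (placePerm k (2 * l) r σ x)
            = placePerm k (2 * l) r σ (wAction k (2 * l) r w x))
      ∧ ∀ x ∈ Nxi2 k l r ξ,
          wAction k (2 * l) r w (contractionSp k l r hr x)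
            = contractionSp k l r hr (wAction k (2 * l) r w x) :=
  ⟨map_Nxi2 k l r w hw ξ, (wAction_inj k (2 * l) r w).injOn,
    fun σ x _ => wAction_placePerm k (2 * l) r w σ x,
    fun x _ => contr_comm k l r hr w hw hw' x⟩

end
end
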